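/- Let $j_1,j_2$ be nonnegative integers with $j_1<j_2$. Then there is a unique nonnegative integer $m(j_2,j_1)$ such that $T^n_{j_1+1}\circ\cdots\circ T^n_{j_2}(y_{j_2})=T_{m(j_2,j_1)}(y_{j_2})$, and it satisfies $\|y_{j_1}\|-1\le m(j_2,j_1)\le\|y_{j_1}\|$. -/

import Mathlib

open Set

noncomputable section

variable {Γ : Type*} [TopologicalSpace Γ] [DiscreteTopology Γ]

/-- `ℓ∞(Γ)`: the Banach space of bounded real functions on `Γ`
(carrying the discrete topology, so that boundedness is the only constraint). -/
abbrev Linf (Γ : Type*) [TopologicalSpace Γ] [DiscreteTopology Γ] : Type _ :=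
  BoundedContinuousFunction Γ ℝ

/-- The entire part of a real number, toward `0`: `[r] = sign(r)⌊|r|⌋`. -/
def ent (r : ℝ) : ℝ := Real.sign r * ⌊|r|⌋

lemma abs_ent_le (r : ℝ) : |ent r| ≤ |r| := by
  have hsign : |Real.sign r| ≤ 1 := by
    rcases lt_trichotomy r 0 with h | h | h
    · rw [Real.sign_of_neg h]; norm_num
    · rw [h, Real.sign_zero]; norm_num
    · rw [Real.sign_of_pos h]; norm_num
  have hfl : |(⌊|r|⌋ : ℝ)| ≤ |r| := by
    rw [abs_of_nonneg (by exact_mod_cast Int.floor_nonneg.mpr (abs_nonneg r))]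
    exact Int.floor_le _
  calc |ent r| = |Real.sign r| * |(⌊|r|⌋ : ℝ)| := abs_mul _ _
    _ ≤ 1 * |r| := mul_le_mul hsign hfl (abs_nonneg _) zero_le_one
    _ = |r| := one_mul _

/-- The coordinatewise quantization `f : ℓ∞(S) → ℓ∞(S)`, `f(x)(γ) = [x(γ)]`. -/
def quant (x : Linf Γ) : Linf Γ :=
  BoundedContinuousFunction.ofNormedAddCommGroup (fun γ => ent (x γ))
    continuous_of_discreteTopology ‖x‖ (fun γ => by
      rw [Real.norm_eq_abs]
      exact (abs_ent_le (x γ)).trans (by simpa using x.norm_coe_le_norm γ))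

/-- Scalar truncation at level `s`. -/
def truncFun (s t : ℝ) : ℝ := if |t| ≤ s then t else s * t / |t|

lemma abs_truncFun_le (s t : ℝ) : |truncFun s t| ≤ max |s| |t| := by
  unfold truncFun
  split_ifs with h
  · exact le_max_right _ _
  · by_cases ht : t = 0
    · simp [ht]
    · have hst : abs (s * t / |t|) = |s| := by
        rw [abs_div, abs_mul, abs_abs, mul_div_assoc, div_self (abs_ne_zero.mpr ht), mul_one]
      rw [hst]; exact le_max_left _ _

/-- The truncation of radius `s`: `T_s(x)(γ) = x(γ)` if `|x(γ)| ≤ s`,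
and `= s·x(γ)/|x(γ)|` otherwise. -/
def trunc (s : ℝ) (x : Linf Γ) : Linf Γ :=
  BoundedContinuousFunction.ofNormedAddCommGroup (fun γ => truncFun s (x γ))
    continuous_of_discreteTopology (max |s| ‖x‖) (fun γ => by
      rw [Real.norm_eq_abs]
      exact (abs_truncFun_le s (x γ)).trans
        (max_le_max le_rfl (by simpa using x.norm_coe_le_norm γ)))

/-- The restriction operator `r_S : ℓ∞(Γ) → ℓ∞(S)`, where `ℓ∞(S)` is identified
isometrically with the subspace of `ℓ∞(Γ)` of functions vanishing off `S`. -/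
def restr (S : Set Γ) (x : Linf Γ) : Linf Γ :=
  BoundedContinuousFunction.ofNormedAddCommGroup (S.indicator x)
    continuous_of_discreteTopology ‖x‖ (fun γ => by
      rw [Real.norm_eq_abs]
      by_cases h : γ ∈ S
      · rw [Set.indicator_of_mem h]
        simpa using x.norm_coe_le_norm γ
      · rw [Set.indicator_of_notMem h]
        simp)

/-- The ball `s·B_{ℓ∞(S)}`, viewed inside `ℓ∞(Γ)`: functions supported on `S`
of norm at most `s`. -/
def suppBall (S : Set Γ) (s : ℝ) : Set (Linf Γ) :=
  {x | (∀ γ ∉ S, x γ = 0) ∧ ‖x‖ ≤ s}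

/-- `chain T a b = T (a+1) ∘ ⋯ ∘ T b` (the identity if `b ≤ a`). -/
def chain {α : Type*} (T : ℕ → α → α) (a b : ℕ) : α → α :=
  Nat.rec id (fun k ih => ih ∘ T (a + k + 1)) (b - a)

/-- Bourgain–Delbaen data on `Γ`: a strictly increasing sequence of nonempty finite
sets `Γs n` (for `n ≥ 1`) with union `Γ`, together with compatible bounded linear
extension operators `i n : ℓ∞(Γ_n) → ℓ∞(Γ)` (realized as operators on `ℓ∞(Γ)`
factoring through the restriction `restr (Γs n)`), with norms bounded by the
positive integer `lam`. -/
structure BD (Γ : Type*) [TopologicalSpace Γ] [DiscreteTopology Γ] where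
  Γs : ℕ → Set Γ
  lam : ℕ
  i : ℕ → Linf Γ →L[ℝ] Linf Γ
  one_le_lam : 1 ≤ lam
  finite : ∀ n, 1 ≤ n → (Γs n).Finite
  nonempty : ∀ n, 1 ≤ n → (Γs n).Nonempty
  ssubset : ∀ n, 1 ≤ n → Γs n ⊂ Γs (n + 1)
  iUnion_eq : ⋃ n ∈ {k : ℕ | 1 ≤ k}, Γs n = Set.univ
  extension : ∀ n, 1 ≤ n → ∀ x : Linf Γ, ∀ γ ∈ Γs n, i n x γ = x γ
  factor : ∀ n, 1 ≤ n → ∀ x : Linf Γ, i n (restr (Γs n) x) = i n x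
  compatible : ∀ n m, 1 ≤ n → n < m → ∀ x : Linf Γ, i m (restr (Γs m) (i n x)) = i n x
  norm_i_le : ∀ n, 1 ≤ n → ‖i n‖ ≤ (lam : ℝ)

namespace BD

/-- `s n = λ^n`. -/
def s (B : BD Γ) (n : ℕ) : ℝ := (B.lam : ℝ) ^ n

/-- The sets `M_n` (with `M_0 = ∅`):
`M_n = M_{n-1} ∪ (f ∘ i_n)(f(s_n B_{ℓ∞(Γ_n)}) \ r_n(M_{n-1}))`. -/
def M (B : BD Γ) : ℕ → Set (Linf Γ)
  | 0 => ∅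
  | n + 1 =>
      M B n ∪
        (fun z => quant (B.i (n + 1) z)) ''
          (quant '' suppBall (B.Γs (n + 1)) (B.s (n + 1)) \ restr (B.Γs (n + 1)) '' M B n)

/-- `M = ⋃ n, M_n`. -/
def Mtot (B : BD Γ) : Set (Linf Γ) := ⋃ n, B.M n

/-- `C_n = (f ∘ i_{n+1} ∘ f ∘ T_{s_{n+1}} ∘ r_{n+1} ∘ i_n)
(f(s_{n+1}B_{ℓ∞(Γ_n)}) \ f(s_n B_{ℓ∞(Γ_n)}))`. -/
def C (B : BD Γ) (n : ℕ) : Set (Linf Γ) :=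
  (fun z => quant (B.i (n + 1) (quant (trunc (B.s (n + 1)) (restr (B.Γs (n + 1)) (B.i n z)))))) ''
    (quant '' suppBall (B.Γs n) (B.s (n + 1)) \ quant '' suppBall (B.Γs n) (B.s n))

/-- `D_n = M_n ∪ C_n`. -/
def D (B : BD Γ) (n : ℕ) : Set (Linf Γ) := B.M n ∪ B.C n

end BD

/-! `T_{j₁+1} ∘ ⋯ ∘ T_{j₂}` moves a point `y_k` only at the step `T_k`, which replaces it by
`T_{n-1}(y_k)` where `n = ‖y_k‖` is a positive integer; this is again an integer point of
norm `n - 1`, hence some `y_{k₀}` with `k₀ < k`. So the orbit of `y_{j₂}` is a sequence of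
truncations of `y_{j₂}`, one level lower at each move, which stops at the first index
`≤ j₁`. As `T_s ∘ T_t = T_{min s t}`, the result is `T_m(y_{j₂})` with `m` the norm of the
final point: `m ≤ ‖y_{j₁}‖` since its index is `≤ j₁`, and `m + 1 ≥ ‖y_{j₁}‖` since the
point before had index `> j₁`. Uniqueness of `m` holds because `m < ‖y_{j₂}‖`. -/

lemma truncFun_eq_max_min {s : ℝ} (hs : 0 ≤ s) (t : ℝ) : truncFun s t = max (-s) (min s t) := by
  unfold truncFun
  split_ifs with h
  · rw [abs_le] at h
    rw [min_eq_right h.2, max_eq_right h.1]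
  · rcases lt_or_gt_of_ne (show t ≠ 0 by rintro rfl; simp_all) with ht | ht
    · rw [abs_of_neg ht] at h ⊢
      rw [min_eq_right (by linarith), max_eq_left (by linarith)]
      field_simp [ht.ne]
    · rw [abs_of_pos ht] at h ⊢
      rw [min_eq_left (by linarith), max_eq_right (by linarith)]
      field_simp [ht.ne']

lemma abs_truncFun {s : ℝ} (hs : 0 ≤ s) (t : ℝ) : |truncFun s t| = min s |t| := by
  rw [truncFun_eq_max_min hs]
  grind

lemma truncFun_truncFun {s t : ℝ} (hs : 0 ≤ s) (ht : 0 ≤ t) (r : ℝ) :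
    truncFun s (truncFun t r) = truncFun (min s t) r := by
  rw [truncFun_eq_max_min hs, truncFun_eq_max_min ht, truncFun_eq_max_min (le_min hs ht)]
  grind

lemma trunc_apply (s : ℝ) (x : Linf Γ) (γ : Γ) : trunc s x γ = truncFun s (x γ) := rfl

lemma trunc_trunc {s t : ℝ} (hs : 0 ≤ s) (ht : 0 ≤ t) (x : Linf Γ) :
    trunc s (trunc t x) = trunc (min s t) x := by
  ext γ
  exact truncFun_truncFun hs ht (x γ)

lemma norm_trunc {s : ℝ} (hs : 0 ≤ s) (x : Linf Γ) : ‖trunc s x‖ = min s ‖x‖ := by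
  have habs (γ : Γ) : |trunc s x γ| = min s |x γ| := abs_truncFun hs (x γ)
  apply le_antisymm
  · refine (BoundedContinuousFunction.norm_le (le_min hs (norm_nonneg x))).2 fun γ => ?_
    rw [Real.norm_eq_abs, habs]
    exact min_le_min le_rfl (x.norm_coe_le_norm γ)
  · by_contra! hlt
    -- below the level `‖trunc s x‖ < s` no coordinate of `x` is cut, so `‖x‖ ≤ ‖trunc s x‖`
    have hx : ‖x‖ ≤ ‖trunc s x‖ := (BoundedContinuousFunction.norm_le (norm_nonneg _)).2
      fun γ => by
        have hγ : min s |x γ| ≤ ‖trunc s x‖ := by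
          simpa only [Real.norm_eq_abs, habs] using (trunc s x).norm_coe_le_norm γ
        rw [Real.norm_eq_abs]
        exact (min_le_iff.1 hγ).resolve_left (by linarith [min_le_left s ‖x‖])
    linarith [min_le_right s ‖x‖]

lemma eq_of_trunc_eq_trunc_of_lt_norm {s t : ℝ} (hs : 0 ≤ s) (ht : 0 ≤ t) {x : Linf Γ}
    (hlt : t < ‖x‖) (h : trunc s x = trunc t x) : s = t := by
  have hnorm := congrArg norm h
  rw [norm_trunc hs, norm_trunc ht, min_eq_left hlt.le] at hnorm
  rcases le_total s ‖x‖ with hsx | hsx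
  · rwa [min_eq_left hsx] at hnorm
  · rw [min_eq_right hsx] at hnorm
    linarith

lemma ent_intCast (k : ℤ) : ent k = k := by
  rw [ent, Real.sign_intCast, ← Int.cast_abs, Int.floor_intCast]
  exact_mod_cast Int.sign_mul_abs k

lemma exists_ent_eq_intCast (r : ℝ) : ∃ k : ℤ, ent r = k := by
  rcases Real.sign_apply_eq r with h | h | h <;> rw [ent, h]
  · exact ⟨-⌊|r|⌋, by push_cast; ring⟩
  · exact ⟨0, by simp⟩
  · exact ⟨⌊|r|⌋, one_mul _⟩

def IsIntValued (x : Linf Γ) : Prop := ∀ γ, ∃ k : ℤ, x γ = k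

lemma range_quant : range (quant : Linf Γ → Linf Γ) = {x | IsIntValued x} := by
  ext x
  refine ⟨?_, fun hx => ⟨x, ?_⟩⟩
  · rintro ⟨z, rfl⟩ γ
    exact exists_ent_eq_intCast (z γ)
  · ext γ
    obtain ⟨k, hk⟩ := hx γ
    change ent (x γ) = x γ
    rw [hk, ent_intCast]

lemma IsIntValued.trunc_natCast {x : Linf Γ} (hx : IsIntValued x) (m : ℕ) :
    IsIntValued (trunc m x) := fun γ => by
  obtain ⟨k, hk⟩ := hx γ
  exact ⟨max (-m) (min m k), by
    rw [trunc_apply, truncFun_eq_max_min m.cast_nonneg, hk]; push_cast; rfl⟩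

lemma IsIntValued.exists_norm_eq_natCast {x : Linf Γ} (hx : IsIntValued x) :
    ∃ n : ℕ, ‖x‖ = n := by
  refine ⟨⌊‖x‖⌋₊, le_antisymm ((BoundedContinuousFunction.norm_le (Nat.cast_nonneg _)).2
    fun γ => ?_) (Nat.floor_le (norm_nonneg x))⟩
  obtain ⟨k, hk⟩ := hx γ
  have hle := x.norm_coe_le_norm γ
  rw [hk, ← norm_natAbs, Real.norm_natCast] at hle ⊢
  exact_mod_cast Nat.le_floor hle

lemma chain_self {α : Type*} (T : ℕ → α → α) (a : ℕ) : chain T a a = id := by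
  simp [chain]

lemma chain_succ {α : Type*} (T : ℕ → α → α) {a b : ℕ} (h : a ≤ b) :
    chain T a (b + 1) = chain T a b ∘ T (b + 1) := by
  obtain ⟨n, rfl⟩ := Nat.exists_eq_add_of_le h
  simp only [chain, show a + n + 1 - a = n + 1 by omega, show a + n - a = n by omega]

lemma chain_apply_of_forall_eq {α : Type*} {T : ℕ → α → α} {a b c : ℕ} {x : α}
    (hac : a ≤ c) (hcb : c ≤ b) (hfix : ∀ j, c < j → j ≤ b → T j x = x) :
    chain T a b x = chain T a c x := by
  induction b, hcb using Nat.le_induction with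
  | base => rfl
  | succ b hcb ih =>
    rw [chain_succ T (hac.trans hcb), Function.comp_apply, hfix (b + 1) (by omega) le_rfl]
    exact ih fun j hj hjb => hfix j hj (by omega)

section Enumeration

variable {y : ℕ → Linf Γ}

lemma exists_lt_eq_trunc (hy0 : y 0 = 0) (hyinj : Function.Injective y)
    (hyint : range y = {x | IsIntValued x}) (hymono : Monotone fun j => ‖y j‖)
    {k : ℕ} (hk : 0 < k) :
    ∃ n : ℕ, ‖y k‖ = n + 1 ∧ ∃ k₀ < k, y k₀ = trunc n (y k) ∧ ‖y k₀‖ = n := by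
  have hint : IsIntValued (y k) := hyint.subset (mem_range_self k)
  obtain ⟨N, hN⟩ := hint.exists_norm_eq_natCast
  obtain ⟨n, rfl⟩ : ∃ n, N = n + 1 := Nat.exists_eq_succ_of_ne_zero fun hN0 => by
    rw [hN0, Nat.cast_zero, norm_eq_zero, ← hy0] at hN
    exact hk.ne' (hyinj hN)
  rw [Nat.cast_succ] at hN
  obtain ⟨k₀, hk₀⟩ : trunc n (y k) ∈ range y := hyint ▸ hint.trunc_natCast n
  have hk₀n : ‖y k₀‖ = n := by
    rw [hk₀, norm_trunc n.cast_nonneg, hN, min_eq_left (by linarith)]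
  exact ⟨n, hN, k₀, hymono.reflect_lt (by simp only [hk₀n, hN]; linarith), hk₀, hk₀n⟩

variable {T : ℕ → Linf Γ → Linf Γ}

lemma exists_chain_apply_eq_trunc (hy0 : y 0 = 0) (hyinj : Function.Injective y)
    (hyint : range y = {x | IsIntValued x}) (hymono : Monotone fun j => ‖y j‖)
    (hT_val : ∀ j, 1 ≤ j → T j (y j) = trunc (‖y j‖ - 1) (y j))
    (hT_id : ∀ j k, k < j → T j (y k) = y k) {a k : ℕ} (hak : a < k) :
    ∃ m : ℕ, chain T a k (y k) = trunc m (y k) ∧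
      ‖y a‖ - 1 ≤ m ∧ (m : ℝ) ≤ ‖y a‖ ∧ (m : ℝ) < ‖y k‖ := by
  induction k using Nat.strong_induction_on with
  | _ k ih =>
    obtain ⟨n, hn, k₀, hk₀, hk₀_eq, hk₀_norm⟩ :=
      exists_lt_eq_trunc hy0 hyinj hyint hymono (a.zero_le.trans_lt hak)
    obtain ⟨b, rfl⟩ : ∃ b, k = b + 1 := ⟨k - 1, by omega⟩
    have hT : T (b + 1) (y (b + 1)) = y k₀ := by
      rw [hT_val _ (by omega), hn, add_sub_cancel_right, hk₀_eq]
    rw [chain_succ T (by omega : a ≤ b), Function.comp_apply, hT]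
    rcases le_or_gt k₀ a with hk₀a | hak₀
    · refine ⟨n, ?_, ?_, hk₀_norm ▸ hymono hk₀a, by linarith⟩
      · rw [chain_apply_of_forall_eq le_rfl (by omega) fun j hj _ => hT_id j k₀ (by omega),
          chain_self, id, hk₀_eq]
      · linarith [hymono hak.le]
    · obtain ⟨m, hm, hlow, hupp, hlt⟩ := ih k₀ hk₀ hak₀
      refine ⟨m, ?_, hlow, hupp, by linarith⟩
      rw [chain_apply_of_forall_eq hak₀.le (by omega) fun j hj _ => hT_id j k₀ hj, hm, hk₀_eq,
        trunc_trunc m.cast_nonneg n.cast_nonneg, min_eq_left (by linarith)]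

end Enumeration

theorem m_exists_unique_and_bound_general
    {Δ : Type*} [TopologicalSpace Δ] [DiscreteTopology Δ]
    (y : ℕ → Linf Δ) (hy0 : y 0 = 0) (hyinj : Function.Injective y)
    (hyrange : Set.range y = Set.range (fun z : Linf Δ => quant z))
    (hymono : ∀ j₁ j₂, j₁ ≤ j₂ → ‖y j₁‖ ≤ ‖y j₂‖)
    (T : ℕ → Linf Δ → Linf Δ)
    (hT_val : ∀ j, 1 ≤ j → T j (y j) = trunc (‖y j‖ - 1) (y j))
    (hT_id : ∀ j k, k < j → T j (y k) = y k)
    (j₁ j₂ : ℕ) (h12 : j₁ < j₂) :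
    (∃! m : ℕ, chain T j₁ j₂ (y j₂) = trunc (m : ℝ) (y j₂)) ∧
    (∀ m : ℕ, chain T j₁ j₂ (y j₂) = trunc (m : ℝ) (y j₂) →
      ‖y j₁‖ - 1 ≤ (m : ℝ) ∧ (m : ℝ) ≤ ‖y j₁‖) := by
  obtain ⟨m, hchain, hlow, hupp, hlt⟩ := exists_chain_apply_eq_trunc hy0 hyinj
    (hyrange.trans range_quant) (fun _ _ => hymono _ _) hT_val hT_id h12
  have huniq (m' : ℕ) (hm' : chain T j₁ j₂ (y j₂) = trunc m' (y j₂)) : m' = m := by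
    exact_mod_cast eq_of_trunc_eq_trunc_of_lt_norm m'.cast_nonneg m.cast_nonneg hlt
      (hm'.symm.trans hchain)
  refine ⟨⟨m, hchain, huniq⟩, fun m' hm' => ?_⟩
  obtain rfl := huniq m' hm'
  exact ⟨hlow, hupp⟩

/-- Lemma 8 (`bound`): for `j₁ < j₂` there is a unique nonnegative integer
`m(j₂,j₁)` with `T_{j₁+1} ∘ ⋯ ∘ T_{j₂}(y_{j₂}) = T_{m(j₂,j₁)}(y_{j₂})`, and it
satisfies `‖y_{j₁}‖ - 1 ≤ m(j₂,j₁) ≤ ‖y_{j₁}‖`. -/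
theorem m_exists_unique_and_bound
    {Δ : Type*} [TopologicalSpace Δ] [DiscreteTopology Δ] [Finite Δ] [Nonempty Δ]
    (y : ℕ → Linf Δ) (hy0 : y 0 = 0) (hyinj : Function.Injective y)
    (hyrange : Set.range y = Set.range (fun z : Linf Δ => quant z))
    (hymono : ∀ j₁ j₂, j₁ ≤ j₂ → ‖y j₁‖ ≤ ‖y j₂‖)
    (T : ℕ → Linf Δ → Linf Δ)
    (hT_val : ∀ j, 1 ≤ j → T j (y j) = trunc (‖y j‖ - 1) (y j))
    (hT_id : ∀ j k, k < j → T j (y k) = y k)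
    (j₁ j₂ : ℕ) (h12 : j₁ < j₂) :
    (∃! m : ℕ, chain T j₁ j₂ (y j₂) = trunc (m : ℝ) (y j₂)) ∧
    (∀ m : ℕ, chain T j₁ j₂ (y j₂) = trunc (m : ℝ) (y j₂) →
      ‖y j₁‖ - 1 ≤ (m : ℝ) ∧ (m : ℝ) ≤ ‖y j₁‖) :=
  m_exists_unique_and_bound_general y hy0 hyinj hyrange hymono T hT_val hT_id j₁ j₂ h12
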